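/- arXiv:1403.2855 — 3 statements merged into one kernel-verified Lean document; each statement's English description precedes it below -/
import Mathlib

section
/- The homomorphism ι : SO(4) → SO(3)×SO(3), ι(a) = (a₊, a₋), is surjective: for every pair (g₊, g₋) of matrices in SO(3) there exists a ∈ SO(4) with a₊ = g₊ and a₋ = g₋. -/
noncomputable section

open ExteriorAlgebra Matrix

/-- The standard basis vectors of `ℝ⁴`. -/
def ε (i : Fin 4) : Fin 4 → ℝ := Pi.single i 1

/-- The standard basis `E₁⁺, E₂⁺, E₃⁺` of the self-dual part `Λ⁺` of `⋀²ℝ⁴`. -/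
def Ep : Fin 3 → ExteriorAlgebra ℝ (Fin 4 → ℝ)
  | 0 => (Real.sqrt 2)⁻¹ • (ι ℝ (ε 0) * ι ℝ (ε 1) + ι ℝ (ε 2) * ι ℝ (ε 3))
  | 1 => (Real.sqrt 2)⁻¹ • (ι ℝ (ε 0) * ι ℝ (ε 2) + ι ℝ (ε 3) * ι ℝ (ε 1))
  | 2 => (Real.sqrt 2)⁻¹ • (ι ℝ (ε 0) * ι ℝ (ε 3) + ι ℝ (ε 1) * ι ℝ (ε 2))

/-- The standard basis `E₁⁻, E₂⁻, E₃⁻` of the anti-self-dual part `Λ⁻` of `⋀²ℝ⁴`. -/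
def Em : Fin 3 → ExteriorAlgebra ℝ (Fin 4 → ℝ)
  | 0 => (Real.sqrt 2)⁻¹ • (ι ℝ (ε 0) * ι ℝ (ε 1) - ι ℝ (ε 2) * ι ℝ (ε 3))
  | 1 => (Real.sqrt 2)⁻¹ • (ι ℝ (ε 0) * ι ℝ (ε 2) - ι ℝ (ε 3) * ι ℝ (ε 1))
  | 2 => (Real.sqrt 2)⁻¹ • (ι ℝ (ε 0) * ι ℝ (ε 3) - ι ℝ (ε 1) * ι ℝ (ε 2))

/-- `Λ⁺`, the span of `E₁⁺, E₂⁺, E₃⁺`. -/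
def ΛPlus : Submodule ℝ (ExteriorAlgebra ℝ (Fin 4 → ℝ)) :=
  Submodule.span ℝ (Set.range Ep)

/-- `Λ⁻`, the span of `E₁⁻, E₂⁻, E₃⁻`. -/
def ΛMinus : Submodule ℝ (ExteriorAlgebra ℝ (Fin 4 → ℝ)) :=
  Submodule.span ℝ (Set.range Em)

/-!
Identify `ℝ⁴` with `ℍ` via `ε₀, ε₁, ε₂, ε₃ ↦ 1, i, j, k`. For unit quaternions `p, q` the map
`x ↦ p x q̄` lies in `SO(4)`; left multiplication by `p` acts on `Λ⁺` by the rotation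
`R(p) : v ↦ p v p̄` of `Im ℍ` and trivially on `Λ⁻`, while right multiplication by `q̄` acts
trivially on `Λ⁺` and by `R(q)` on `Λ⁻`. So it suffices that every `g ∈ SO(3)` is `R(p)` for a unit
`p`: pick `p₁` with `R(p₁) e₃ = g e₃`; then `R(p₁)⁻¹ g` fixes `e₃`, so it is a rotation about `e₃`,
which is `R` of a half-angle quaternion `cos (θ/2) + sin (θ/2) k`.
-/

open Quaternion

theorem mulVec_ε (a : Matrix (Fin 4) (Fin 4) ℝ) (j : Fin 4) : a *ᵥ ε j = ∑ k, a k j • ε k := by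
  ext k
  simp [ε, Finset.sum_apply, Pi.single_apply]

-- The six bivectors are those occurring in `Ep` and `Em`, hence `ε 3 ∧ ε 1` and not `ε 1 ∧ ε 3`.
theorem map_mulVecLin_ι_ε_mul_ι_ε (a : Matrix (Fin 4) (Fin 4) ℝ) (i j : Fin 4) :
    map a.mulVecLin (ι ℝ (ε i) * ι ℝ (ε j)) =
      (a 0 i * a 1 j - a 1 i * a 0 j) • (ι ℝ (ε 0) * ι ℝ (ε 1)) +
      (a 0 i * a 2 j - a 2 i * a 0 j) • (ι ℝ (ε 0) * ι ℝ (ε 2)) +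
      (a 0 i * a 3 j - a 3 i * a 0 j) • (ι ℝ (ε 0) * ι ℝ (ε 3)) +
      (a 2 i * a 3 j - a 3 i * a 2 j) • (ι ℝ (ε 2) * ι ℝ (ε 3)) +
      (a 3 i * a 1 j - a 1 i * a 3 j) • (ι ℝ (ε 3) * ι ℝ (ε 1)) +
      (a 1 i * a 2 j - a 2 i * a 1 j) • (ι ℝ (ε 1) * ι ℝ (ε 2)) := by
  have swap (k l : Fin 4) : ι ℝ (ε l) * ι ℝ (ε k) = -(ι ℝ (ε k) * ι ℝ (ε l)) :=
    eq_neg_of_add_eq_zero_left (ι_add_mul_swap _ _)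
  rw [_root_.map_mul, map_apply_ι, map_apply_ι, mulVecLin_apply, mulVecLin_apply, mulVec_ε,
    mulVec_ε]
  simp only [Fin.sum_univ_four, map_add, _root_.map_smul, add_mul, mul_add, smul_mul_smul,
    ι_sq_zero, smul_zero, add_zero, zero_add, swap 0 1, swap 0 2, swap 0 3, swap 2 3, swap 1 2,
    swap 3 1]
  match_scalars <;> ring

theorem map_mulVecLin_mul {n : Type*} [Fintype n] (a b : Matrix n n ℝ)
    (x : ExteriorAlgebra ℝ (n → ℝ)) :
    map (a * b).mulVecLin x = map a.mulVecLin (map b.mulVecLin x) := by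
  rw [mulVecLin_mul, ← map_comp_map]
  rfl

-- The matrices of `x ↦ p * x` and `x ↦ x * q` on `ℍ ≃ ℝ⁴`, with `1, i, j, k ↦ ε 0, ε 1, ε 2, ε 3`.
def quatLeftMul (p : ℍ[ℝ]) : Matrix (Fin 4) (Fin 4) ℝ :=
  !![p.re, -p.imI, -p.imJ, -p.imK;
     p.imI, p.re, -p.imK, p.imJ;
     p.imJ, p.imK, p.re, -p.imI;
     p.imK, -p.imJ, p.imI, p.re]

def quatRightMul (q : ℍ[ℝ]) : Matrix (Fin 4) (Fin 4) ℝ :=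
  !![q.re, -q.imI, -q.imJ, -q.imK;
     q.imI, q.re, q.imK, -q.imJ;
     q.imJ, -q.imK, q.re, q.imI;
     q.imK, q.imJ, -q.imI, q.re]

-- The matrix of `v ↦ p * v * star p` on `Im ℍ ≃ ℝ³`: a rotation scaled by `normSq p`.
def quatRot (p : ℍ[ℝ]) : Matrix (Fin 3) (Fin 3) ℝ :=
  !![p.re ^ 2 + p.imI ^ 2 - p.imJ ^ 2 - p.imK ^ 2, 2 * (p.imI * p.imJ - p.re * p.imK),
      2 * (p.imI * p.imK + p.re * p.imJ);
     2 * (p.imI * p.imJ + p.re * p.imK), p.re ^ 2 - p.imI ^ 2 + p.imJ ^ 2 - p.imK ^ 2,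
      2 * (p.imJ * p.imK - p.re * p.imI);
     2 * (p.imI * p.imK - p.re * p.imJ), 2 * (p.imJ * p.imK + p.re * p.imI),
      p.re ^ 2 - p.imI ^ 2 - p.imJ ^ 2 + p.imK ^ 2]

theorem quatLeftMul_transpose_mul_self (p : ℍ[ℝ]) :
    (quatLeftMul p)ᵀ * quatLeftMul p = normSq p • 1 := by
  ext i j
  fin_cases i <;> fin_cases j <;>
    simp [quatLeftMul, mul_apply, Fin.sum_univ_four, normSq_def', one_apply] <;> ring

theorem quatRightMul_transpose_mul_self (q : ℍ[ℝ]) :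
    (quatRightMul q)ᵀ * quatRightMul q = normSq q • 1 := by
  ext i j
  fin_cases i <;> fin_cases j <;>
    simp [quatRightMul, mul_apply, Fin.sum_univ_four, normSq_def', one_apply] <;> ring

theorem det_quatLeftMul (p : ℍ[ℝ]) : (quatLeftMul p).det = normSq p ^ 2 := by
  simp [quatLeftMul, det_succ_row_zero, Fin.sum_univ_succ, Fin.succAbove, normSq_def']
  ring

theorem det_quatRightMul (q : ℍ[ℝ]) : (quatRightMul q).det = normSq q ^ 2 := by
  simp [quatRightMul, det_succ_row_zero, Fin.sum_univ_succ, Fin.succAbove, normSq_def']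
  ring

theorem map_quatLeftMul_Ep (p : ℍ[ℝ]) (j : Fin 3) :
    map (quatLeftMul p).mulVecLin (Ep j) = ∑ i, quatRot p i j • Ep i := by
  fin_cases j <;>
  · simp only [Ep, _root_.map_smul, map_add, map_mulVecLin_ι_ε_mul_ι_ε, Fin.sum_univ_three,
      quatLeftMul, quatRot, of_apply, cons_val', cons_val_zero, cons_val_one, cons_val,
      cons_val_fin_one, Fin.zero_eta, Fin.mk_one, Fin.reduceFinMk]
    match_scalars <;> ring

theorem map_quatLeftMul_Em (p : ℍ[ℝ]) (j : Fin 3) :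
    map (quatLeftMul p).mulVecLin (Em j) = normSq p • Em j := by
  fin_cases j <;>
  · simp only [Em, _root_.map_smul, map_sub, map_mulVecLin_ι_ε_mul_ι_ε, normSq_def',
      quatLeftMul, of_apply, cons_val', cons_val_zero, cons_val_one, cons_val,
      cons_val_fin_one]
    match_scalars <;> ring

theorem map_quatRightMul_star_Ep (q : ℍ[ℝ]) (j : Fin 3) :
    map (quatRightMul (star q)).mulVecLin (Ep j) = normSq q • Ep j := by
  fin_cases j <;>
  · simp only [Ep, _root_.map_smul, map_add, map_mulVecLin_ι_ε_mul_ι_ε, normSq_def',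
      quatRightMul, re_star, imI_star, imJ_star, imK_star, of_apply, cons_val', cons_val_zero,
      cons_val_one, cons_val, cons_val_fin_one]
    match_scalars <;> ring

theorem map_quatRightMul_star_Em (q : ℍ[ℝ]) (j : Fin 3) :
    map (quatRightMul (star q)).mulVecLin (Em j) = ∑ i, quatRot q i j • Em i := by
  fin_cases j <;>
  · simp only [Em, _root_.map_smul, map_sub, map_mulVecLin_ι_ε_mul_ι_ε, Fin.sum_univ_three,
      quatRightMul, quatRot, re_star, imI_star, imJ_star, imK_star, of_apply, cons_val',
      cons_val_zero, cons_val_one, cons_val, cons_val_fin_one, Fin.zero_eta, Fin.mk_one,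
      Fin.reduceFinMk]
    match_scalars <;> ring

def quatBimul (p q : ℍ[ℝ]) : Matrix (Fin 4) (Fin 4) ℝ := quatLeftMul p * quatRightMul (star q)

theorem quatBimul_transpose_mul_self (p q : ℍ[ℝ]) :
    (quatBimul p q)ᵀ * quatBimul p q = (normSq p * normSq q) • 1 := by
  rw [quatBimul, transpose_mul, Matrix.mul_assoc, ← Matrix.mul_assoc (quatLeftMul p)ᵀ,
    quatLeftMul_transpose_mul_self, Matrix.smul_mul, Matrix.one_mul, Matrix.mul_smul,
    quatRightMul_transpose_mul_self, normSq_star, smul_smul]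

theorem det_quatBimul (p q : ℍ[ℝ]) : (quatBimul p q).det = (normSq p * normSq q) ^ 2 := by
  rw [quatBimul, det_mul, det_quatLeftMul, det_quatRightMul, normSq_star, mul_pow]

theorem map_quatBimul_Ep (p q : ℍ[ℝ]) (j : Fin 3) :
    map (quatBimul p q).mulVecLin (Ep j) = normSq q • ∑ i, quatRot p i j • Ep i := by
  rw [quatBimul, map_mulVecLin_mul, map_quatRightMul_star_Ep, _root_.map_smul, map_quatLeftMul_Ep]

theorem map_quatBimul_Em (p q : ℍ[ℝ]) (j : Fin 3) :
    map (quatBimul p q).mulVecLin (Em j) = normSq p • ∑ i, quatRot q i j • Em i := by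
  simp only [quatBimul, map_mulVecLin_mul, map_quatRightMul_star_Em, map_sum, _root_.map_smul,
    map_quatLeftMul_Em, Finset.smul_sum, smul_comm (normSq p)]

theorem quatRot_mul (p q : ℍ[ℝ]) : quatRot (p * q) = quatRot p * quatRot q := by
  ext i j
  fin_cases i <;> fin_cases j <;>
    simp [quatRot, mul_apply, Fin.sum_univ_three, re_mul, imI_mul, imJ_mul, imK_mul] <;> ring

theorem transpose_quatRot (p : ℍ[ℝ]) : (quatRot p)ᵀ = quatRot (star p) := by
  ext i j
  fin_cases i <;> fin_cases j <;> simp [quatRot] <;> ring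

theorem quatRot_one : quatRot 1 = 1 := by
  ext i j
  fin_cases i <;> fin_cases j <;> simp [quatRot]

theorem det_quatRot (p : ℍ[ℝ]) : (quatRot p).det = normSq p ^ 3 := by
  simp [quatRot, det_fin_three, normSq_def']
  ring

theorem quatRot_mul_quatRot_star {p : ℍ[ℝ]} (hp : normSq p = 1) :
    quatRot p * quatRot (star p) = 1 := by
  rw [← quatRot_mul, self_mul_star, hp, coe_one, quatRot_one]

theorem quatRot_star_mul_quatRot {p : ℍ[ℝ]} (hp : normSq p = 1) :
    quatRot (star p) * quatRot p = 1 := by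
  rw [← quatRot_mul, star_mul_self, hp, coe_one, quatRot_one]

theorem exists_half_angle {C S : ℝ} (h : C ^ 2 + S ^ 2 = 1) :
    ∃ c s : ℝ, c ^ 2 + s ^ 2 = 1 ∧ c ^ 2 - s ^ 2 = C ∧ 2 * c * s = S := by
  rcases eq_or_ne C (-1) with rfl | hC
  · exact ⟨0, 1, by norm_num, by norm_num, by nlinarith⟩
  have hC' : 0 < 1 + C := lt_of_le_of_ne (by nlinarith) (fun h' => hC (by linarith))
  set c := √((1 + C) / 2)
  have hc : c ^ 2 = (1 + C) / 2 := Real.sq_sqrt (by linarith)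
  have hc₀ : c ≠ 0 := (Real.sqrt_pos.2 (by linarith)).ne'
  refine ⟨c, S / (2 * c), ?_, ?_, by field_simp⟩
  · field_simp
    linear_combination (4 * c ^ 2 + 2 * C - 2) * hc + h
  · field_simp
    linear_combination (4 * c ^ 2 + 2 - 2 * C) * hc - h

theorem exists_quatRot_mulVec_single_eq {v : Fin 3 → ℝ} (hv : v ⬝ᵥ v = 1) :
    ∃ p : ℍ[ℝ], normSq p = 1 ∧ quatRot p *ᵥ Pi.single 2 1 = v := by
  have hv' : v 0 ^ 2 + v 1 ^ 2 + v 2 ^ 2 = 1 := by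
    simpa [dotProduct, Fin.sum_univ_three, sq] using hv
  simp only [mulVec_single_one, funext_iff, Fin.forall_fin_succ, IsEmpty.forall_iff, and_true]
  rcases eq_or_ne (v 2) (-1) with hz | hz
  · have hx : v 0 = 0 := by nlinarith
    have hy : v 1 = 0 := by nlinarith
    refine ⟨(equivTuple ℝ).symm ![0, 0, 1, 0], ?_, ?_⟩
    · rw [normSq_def']
      simp
    · simp [quatRot, hx, hy, hz]
  have hz' : 0 < 1 + v 2 := lt_of_le_of_ne (by nlinarith) (fun h => hz (by linarith))
  set c := √((1 + v 2) / 2)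
  have hc : c ^ 2 = (1 + v 2) / 2 := Real.sq_sqrt (by linarith)
  have hc₀ : c ≠ 0 := (Real.sqrt_pos.2 (by linarith)).ne'
  -- `p` is `1 + ⟪e₃, v⟫ + e₃ × v` normalised, the standard quaternion rotating `e₃` onto `v`.
  refine ⟨(equivTuple ℝ).symm ![c, -v 1 / (2 * c), v 0 / (2 * c), 0], ?_, ?_⟩
  · rw [normSq_def']
    simp only [equivTuple_symm_apply, cons_val_zero, cons_val_one, cons_val, ne_eq,
      OfNat.ofNat_ne_zero, not_false_eq_true, zero_pow, add_zero]
    field_simp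
    linear_combination (4 * c ^ 2 + 2 * v 2 - 2) * hc + hv'
  · simp only [quatRot, equivTuple_symm_apply, cons_val_zero, cons_val_one, cons_val,
      zero_pow, sub_zero, mul_zero, zero_add, add_zero, zero_sub, mul_neg, col_apply, of_apply,
      cons_val', cons_val_fin_one, Fin.succ_zero_eq_one, Fin.succ_one_eq_two, ne_eq,
      OfNat.ofNat_ne_zero, not_false_eq_true]
    refine ⟨by field_simp, by field_simp, ?_⟩
    field_simp
    linear_combination (4 * c ^ 2 + 2 - 2 * v 2) * hc - hv'

theorem exists_quatRot_eq_of_mulVec_single_eq {h : Matrix (Fin 3) (Fin 3) ℝ}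
    (h₁ : hᵀ * h = 1) (h₂ : h.det = 1) (hfix : h *ᵥ Pi.single 2 1 = Pi.single 2 1) :
    ∃ q : ℍ[ℝ], normSq q = 1 ∧ quatRot q = h := by
  rw [mulVec_single_one] at hfix
  have h02 : h 0 2 = 0 := by simpa using congrFun hfix 0
  have h12 : h 1 2 = 0 := by simpa using congrFun hfix 1
  have h22 : h 2 2 = 1 := by simpa using congrFun hfix 2
  have hhT : h * hᵀ = 1 := mul_eq_one_comm.mp h₁
  have row₂ : h 2 0 ^ 2 + h 2 1 ^ 2 + h 2 2 ^ 2 = 1 := by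
    simpa [mul_apply, Fin.sum_univ_three, sq] using congrFun (congrFun hhT 2) 2
  have h20 : h 2 0 = 0 := by nlinarith [sq_nonneg (h 2 0), sq_nonneg (h 2 1)]
  have h21 : h 2 1 = 0 := by nlinarith [sq_nonneg (h 2 0), sq_nonneg (h 2 1)]
  have col₀ : h 0 0 ^ 2 + h 1 0 ^ 2 = 1 := by
    simpa [mul_apply, Fin.sum_univ_three, sq, h20] using congrFun (congrFun h₁ 0) 0
  have col₀₁ : h 0 0 * h 0 1 + h 1 0 * h 1 1 = 0 := by
    simpa [mul_apply, Fin.sum_univ_three, h20] using congrFun (congrFun h₁ 0) 1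
  have hdet : h 0 0 * h 1 1 - h 0 1 * h 1 0 = 1 := by
    rw [det_fin_three, h02, h12, h22, h20, h21] at h₂
    linear_combination h₂
  have h11 : h 1 1 = h 0 0 := by
    linear_combination -h 1 1 * col₀ + h 0 0 * hdet + h 1 0 * col₀₁
  have h01 : h 0 1 = -h 1 0 := by
    linear_combination h 0 0 * col₀₁ - h 1 0 * hdet - h 0 1 * col₀
  obtain ⟨c, s, hcs, hC, hS⟩ := exists_half_angle col₀
  refine ⟨(equivTuple ℝ).symm ![c, 0, 0, s], ?_, ?_⟩
  · rw [normSq_def']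
    simpa [add_comm] using hcs
  · ext i j
    fin_cases i <;> fin_cases j <;> simp [quatRot, h02, h12, h22, h20, h21, h01, h11] <;> linarith

theorem exists_quatRot_eq {g : Matrix (Fin 3) (Fin 3) ℝ} (h₁ : gᵀ * g = 1) (h₂ : g.det = 1) :
    ∃ p : ℍ[ℝ], normSq p = 1 ∧ quatRot p = g := by
  have hunit : (g *ᵥ Pi.single 2 1) ⬝ᵥ (g *ᵥ Pi.single 2 1) = 1 := by
    rw [dotProduct_mulVec, vecMul_mulVec, h₁]
    simp
  obtain ⟨p, hp, hpg⟩ := exists_quatRot_mulVec_single_eq hunit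
  have hh₁ : (quatRot (star p) * g)ᵀ * (quatRot (star p) * g) = 1 := by
    rw [transpose_mul, transpose_quatRot, star_star, Matrix.mul_assoc,
      ← Matrix.mul_assoc (quatRot p), quatRot_mul_quatRot_star hp, Matrix.one_mul, h₁]
  have hh₂ : (quatRot (star p) * g).det = 1 := by
    rw [det_mul, det_quatRot, normSq_star, hp, h₂, one_pow, one_mul]
  have hfix : (quatRot (star p) * g) *ᵥ Pi.single 2 1 = Pi.single 2 1 := by
    rw [← mulVec_mulVec, ← hpg, mulVec_mulVec, quatRot_star_mul_quatRot hp, one_mulVec]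
  obtain ⟨q, hq, hqh⟩ := exists_quatRot_eq_of_mulVec_single_eq hh₁ hh₂ hfix
  refine ⟨p * q, by rw [map_mul, hp, hq, one_mul], ?_⟩
  rw [quatRot_mul, hqh, ← Matrix.mul_assoc, quatRot_mul_quatRot_star hp, Matrix.one_mul]

/-- The homomorphism `ι : SO(4) → SO(3) × SO(3)`, `ι(a) = (a₊, a₋)`, is surjective:
for all `g₊, g₋ ∈ SO(3)` there is `a ∈ SO(4)` whose induced map `⋀²a` acts on the
bases `E⁺` and `E⁻` of `Λ⁺` and `Λ⁻` by the matrices `g₊` and `g₋` respectively. -/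
theorem iota_surjective (gp gm : Matrix (Fin 3) (Fin 3) ℝ)
    (hgp₁ : gpᵀ * gp = 1) (hgp₂ : gp.det = 1) (hgm₁ : gmᵀ * gm = 1) (hgm₂ : gm.det = 1) :
    ∃ a : Matrix (Fin 4) (Fin 4) ℝ, aᵀ * a = 1 ∧ a.det = 1 ∧
      (∀ j, ExteriorAlgebra.map a.mulVecLin (Ep j) = ∑ i, gp i j • Ep i) ∧
      (∀ j, ExteriorAlgebra.map a.mulVecLin (Em j) = ∑ i, gm i j • Em i) := by
  obtain ⟨p, hp, rfl⟩ := exists_quatRot_eq hgp₁ hgp₂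
  obtain ⟨q, hq, rfl⟩ := exists_quatRot_eq hgm₁ hgm₂
  refine ⟨quatBimul p q, ?_, ?_, fun j => ?_, fun j => ?_⟩
  · rw [quatBimul_transpose_mul_self, hp, hq, one_mul, one_smul]
  · rw [det_quatBimul, hp, hq, one_mul, one_pow]
  · rw [map_quatBimul_Ep, hq, one_smul]
  · rw [map_quatBimul_Em, hp, one_smul]
end
end

section
/- The kernel of the homomorphism ι : SO(4) → SO(3)×SO(3) is {I₄, −I₄}: if a ∈ SO(4) satisfies ⋀²a(Eᵢ⁺) = Eᵢ⁺ and ⋀²a(Eᵢ⁻) = Eᵢ⁻ for all i ∈ {1,2,3} (equivalently, ⋀²a is the identity on ⋀²ℝ⁴), then a = I₄ or a = −I₄. Hence ι is a 2-to-1 covering homomorphism. -/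
/-!
Adding and subtracting `Eᵢ⁺` and `Eᵢ⁻` shows that `⋀²a` fixes every `εₖ ∧ εₗ`, i.e.
`(a εₖ) ∧ (a εₗ) = εₖ ∧ εₗ`: all 2×2 minors of `a` are those of the identity.
Then `(a εᵢ) ∧ εᵢ ∧ εⱼ = (a εᵢ) ∧ (a εᵢ) ∧ (a εⱼ) = 0` for every `j`, so the column `a εᵢ`
lies in every coordinate plane through `εᵢ` and `a` is diagonal. The minors give
`aᵢᵢ aⱼⱼ = 1` for `i ≠ j`, and a third index `k` forces `aᵢᵢ = aⱼⱼ = c` with `c² = 1`.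
-/

noncomputable section

open ExteriorAlgebra Matrix

section
variable {R M : Type*} [CommRing R] [AddCommGroup M] [Module R M]

def wedgeCoord (f g : Module.Dual R M) : ExteriorAlgebra R M →ₗ[R] R :=
  liftAlternating (Pi.single 2 (Matrix.detRowAlternating.compLinearMap (LinearMap.pi ![f, g])))

theorem wedgeCoord_ι_mul_ι (f g : Module.Dual R M) (u v : M) :
    wedgeCoord f g (ι R u * ι R v) = f u * g v - f v * g u := by
  rw [wedgeCoord, liftAlternating_ι_mul, liftAlternating_ι]
  change (Matrix.of fun i j => ![f, g] j (![u, v] i)).det = _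
  rw [Matrix.det_fin_two]
  simp [mul_comm]

theorem ι_mul_ι_swap_eq {u v u' v' : M} (h : ι R u * ι R v = ι R u' * ι R v') :
    ι R v * ι R u = ι R v' * ι R u' := by
  rw [eq_neg_of_add_eq_zero_left (ι_add_mul_swap v u),
    eq_neg_of_add_eq_zero_left (ι_add_mul_swap v' u'), h]

end

theorem map_eq_self_of_map_smul_add_sub {K V F : Type*} [Field K] [NeZero (2 : K)]
    [AddCommGroup V] [Module K V] [FunLike F V V] [LinearMapClass F K V V]
    (f : F) {s : K} (hs : s ≠ 0) {x y : V}
    (hadd : f (s • (x + y)) = s • (x + y)) (hsub : f (s • (x - y)) = s • (x - y)) :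
    f x = x ∧ f y = y := by
  rw [map_smul] at hadd hsub
  have h₁ := smul_right_injective V hs hadd
  have h₂ := smul_right_injective V hs hsub
  simp only [map_add, map_sub] at h₁ h₂
  constructor <;> apply smul_right_injective V (two_ne_zero : (2 : K) ≠ 0)
  · linear_combination (norm := module) h₁ + h₂
  · linear_combination (norm := module) h₁ - h₂

theorem mul_sub_mul_eq_of_ι_mul_ι_eq {n R : Type*} [CommRing R] {u v u' v' : n → R}
    (h : ι R u * ι R v = ι R u' * ι R v') (k l : n) :
    u k * v l - u l * v k = u' k * v' l - u' l * v' k := by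
  have hkl := congrArg (wedgeCoord (LinearMap.proj k) (LinearMap.proj l)) h
  simp only [wedgeCoord_ι_mul_ι, LinearMap.proj_apply] at hkl
  linear_combination hkl

theorem Matrix.eq_one_or_eq_neg_one_of_minors_eq {n R : Type*} [Fintype n] [DecidableEq n]
    [CommRing R] [NoZeroDivisors R]
    (hn : 3 ≤ Fintype.card n) (a : Matrix n n R)
    (ha : ∀ i j k l, a k i * a l j - a l i * a k j =
      (1 : Matrix n n R) k i * (1 : Matrix n n R) l j -
        (1 : Matrix n n R) l i * (1 : Matrix n n R) k j) :
    a = 1 ∨ a = -1 := by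
  have hne : ∀ i j : n, ∃ k, k ≠ i ∧ k ≠ j :=
    ENat.exists_ne_ne_of_three_le (by simpa [ENat.card_eq_coe_fintype_card] using hn)
  have hoff : ∀ i k, k ≠ i → a k i = 0 := by
    intro i k hki
    obtain ⟨j, hji, hjk⟩ := hne i k
    have h₁ := ha i j i j
    have h₂ := ha i j k j
    have h₃ := ha i j k i
    simp only [one_apply_eq, one_apply_ne hki, one_apply_ne hji, one_apply_ne hjk.symm,
      one_apply_ne hji.symm] at h₁ h₂ h₃
    -- expand the vanishing 3×3 minor of the columns `i, i, j` in the rows `k, i, j`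
    linear_combination a i i * h₂ - a k i * h₁ - a j i * h₃
  have hdiag : ∀ i j, i ≠ j → a i i * a j j = 1 := by
    intro i j hij
    have h := ha i j i j
    simp only [one_apply_eq, one_apply_ne hij.symm, hoff i j hij.symm] at h
    linear_combination h
  have hconst : ∀ i j, a i i = a j j := by
    intro i j
    obtain ⟨k, hki, hkj⟩ := hne i j
    linear_combination a j j * hdiag i k hki.symm - a i i * hdiag j k hkj.symm
  obtain ⟨i₀⟩ : Nonempty n := Fintype.card_pos_iff.mp (by omega)
  obtain ⟨k, hk, -⟩ := hne i₀ i₀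
  have hscalar : a = a i₀ i₀ • 1 := by
    ext i j
    obtain rfl | hij := eq_or_ne i j
    · simp [hconst i i₀]
    · simp [hoff j i hij, one_apply_ne hij]
  have hsq : a i₀ i₀ * a i₀ i₀ = 1 := by
    linear_combination hdiag i₀ k hk.symm - a i₀ i₀ * hconst k i₀
  rcases mul_self_eq_one_iff.mp hsq with h | h
  · left; rw [hscalar, h, one_smul]
  · right; rw [hscalar, h, neg_one_smul]

theorem ι_col_mul_ι_col_eq_of_fixes_Ep_Em (a : Matrix (Fin 4) (Fin 4) ℝ)
    (hp : ∀ i, ExteriorAlgebra.map a.mulVecLin (Ep i) = Ep i)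
    (hm : ∀ i, ExteriorAlgebra.map a.mulVecLin (Em i) = Em i) (i j : Fin 4) :
    ι ℝ (a.col i) * ι ℝ (a.col j) = ι ℝ (ε i) * ι ℝ (ε j) := by
  have hs : (√2)⁻¹ ≠ 0 := by positivity
  have hmap : ∀ i j, ExteriorAlgebra.map a.mulVecLin (ι ℝ (ε i) * ι ℝ (ε j)) =
      ι ℝ (a.col i) * ι ℝ (a.col j) := fun i j => by
    rw [map_mul, map_apply_ι, map_apply_ι, mulVecLin_apply, mulVecLin_apply, ε, ε,
      mulVec_single_one, mulVec_single_one]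
  obtain ⟨h01, h23⟩ := map_eq_self_of_map_smul_add_sub _ hs (hp 0) (hm 0)
  obtain ⟨h02, h31⟩ := map_eq_self_of_map_smul_add_sub _ hs (hp 1) (hm 1)
  obtain ⟨h03, h12⟩ := map_eq_self_of_map_smul_add_sub _ hs (hp 2) (hm 2)
  rw [hmap] at h01 h23 h02 h31 h03 h12
  fin_cases i <;> fin_cases j <;> simp only [Fin.zero_eta, Fin.mk_one, Fin.reduceFinMk, ι_sq_zero]
  all_goals first | assumption | exact ι_mul_ι_swap_eq ‹_›

theorem iota_kernel_general (a : Matrix (Fin 4) (Fin 4) ℝ)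
    (hp : ∀ i, ExteriorAlgebra.map a.mulVecLin (Ep i) = Ep i)
    (hm : ∀ i, ExteriorAlgebra.map a.mulVecLin (Em i) = Em i) :
    a = 1 ∨ a = -1 := by
  refine Matrix.eq_one_or_eq_neg_one_of_minors_eq (by simp) a fun i j k l => ?_
  simpa [ε, Matrix.one_apply, Pi.single_apply, eq_comm] using
    mul_sub_mul_eq_of_ι_mul_ι_eq (ι_col_mul_ι_col_eq_of_fixes_Ep_Em a hp hm i j) k l

/-- The kernel of `ι : SO(4) → SO(3) × SO(3)` is `{I₄, −I₄}`: if `a ∈ SO(4)` is such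
that `⋀²a` fixes every `Eᵢ⁺` and every `Eᵢ⁻`, then `a = I₄` or `a = −I₄`. -/
theorem iota_kernel (a : Matrix (Fin 4) (Fin 4) ℝ)
    (ha₁ : aᵀ * a = 1) (ha₂ : a.det = 1)
    (hp : ∀ i, ExteriorAlgebra.map a.mulVecLin (Ep i) = Ep i)
    (hm : ∀ i, ExteriorAlgebra.map a.mulVecLin (Em i) = Em i) :
    a = 1 ∨ a = -1 :=
  iota_kernel_general a hp hm
end
end

section
/- Let B be a 3×3 real matrix. Then the (1,2), (1,3), (2,2), (2,3), (3,2) and (3,3) entries of hᵀBg vanish for all pairs g, h ∈ SO(3) if and only if B = 0. -/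
/-! With `h = g = 1` the hypothesis kills the second and third columns of `B`. The cyclic
permutation matrix of `finRotate 3` is an even permutation matrix, hence in `SO(3)`, and right
multiplication by it moves the first column of `B` into the second, so that column vanishes too. -/

open Matrix Equiv

theorem Matrix.transpose_permMatrix_mul_self {n R : Type*} [DecidableEq n] [Fintype n]
    [NonAssocSemiring R] (σ : Perm n) : (σ.permMatrix R)ᵀ * σ.permMatrix R = 1 := by
  rw [transpose_permMatrix, ← permMatrix_mul, mul_inv_cancel, permMatrix_one]

theorem Matrix.mul_permMatrix_apply {m n R : Type*} [DecidableEq n] [Fintype n]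
    [NonAssocSemiring R] (B : Matrix m n R) (σ : Perm n) (i : m) (j : n) :
    (B * σ.permMatrix R) i j = B i (σ.symm j) := by
  rw [PEquiv.mul_toMatrix_toPEquiv]
  rfl

theorem Matrix.det_permMatrix_finRotate {R : Type*} [CommRing R] (n : ℕ) :
    ((finRotate (n + 1)).permMatrix R).det = (-1) ^ n := by
  simp [sign_finRotate]

/-- For a `3×3` real matrix `B`, the `(1,2)`, `(1,3)`, `(2,2)`, `(2,3)`, `(3,2)` and
`(3,3)` entries of `hᵀBg` vanish for all `g, h ∈ SO(3)` if and only if `B = 0`. -/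
theorem entries_vanish_iff_zero (B : Matrix (Fin 3) (Fin 3) ℝ) :
    (∀ g h : Matrix (Fin 3) (Fin 3) ℝ, gᵀ * g = 1 → g.det = 1 → hᵀ * h = 1 → h.det = 1 →
      (hᵀ * B * g) 0 1 = 0 ∧ (hᵀ * B * g) 0 2 = 0 ∧
      (hᵀ * B * g) 1 1 = 0 ∧ (hᵀ * B * g) 1 2 = 0 ∧
      (hᵀ * B * g) 2 1 = 0 ∧ (hᵀ * B * g) 2 2 = 0) ↔
    B = 0 := by
  refine ⟨fun hvan => ?_, by rintro rfl; simp⟩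
  have hcols (g : Matrix (Fin 3) (Fin 3) ℝ) (hg : gᵀ * g = 1) (hdet : g.det = 1) (i : Fin 3) :
      (B * g) i 1 = 0 ∧ (B * g) i 2 = 0 := by
    have hBg := hvan g 1 hg hdet (by simp) (by simp)
    simp only [transpose_one, one_mul] at hBg
    fin_cases i <;> simp [hBg]
  have hrot := hcols _ (transpose_permMatrix_mul_self (finRotate 3))
    ((det_permMatrix_finRotate 2).trans (by norm_num))
  ext i j
  fin_cases j
  · simpa [mul_permMatrix_apply] using (hrot i).1
  · simpa using (hcols 1 (by simp) (by simp) i).1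
  · simpa using (hcols 1 (by simp) (by simp) i).2
end
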